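/- A measure-preserving transformation T of a probability space possessing an ergodic homoclinic group is mixing of all orders. -/

import Mathlib

open MeasureTheory Filter Set
open scoped symmDiff ENNReal

/-- The `n`-th iterate (with `n : ℤ`) of a measurable automorphism, as a map. -/
noncomputable def mzpow {X : Type*} [MeasurableSpace X] (T : X ≃ᵐ X) (n : ℤ) : X → X :=
  if 0 ≤ n then (⇑T)^[n.toNat] else (⇑T.symm)^[(-n).toNat]

/-!
Induction on the number of sets. After shifting time so that the last set `A_r` sits at time
`0`, the measure in question is `μ(A_r ∩ G_t)` with `G_t = ⋂_{i<r} T^{n_i - n_r} A_i`, and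
`μ(G_t) → ∏_{i<r} μ(A_i)` by induction. Since `n_i - n_r → -∞`, every homoclinic `S` almost
fixes `G_t`: `μ(S T^{-n} A Δ T^{-n} A) = μ(T^n S T^{-n} A Δ A) → 0`. Along any ultrafilter,
`B ↦ lim μ(B ∩ G_t)` is a measure `ρ ≤ μ` which is therefore invariant under `H(T)`; its
density with respect to `μ` is then `H(T)`-invariant, hence constant by ergodicity, so
`ρ = ρ(X) μ` and `μ(B ∩ G_t) → μ(B) ∏_{i<r} μ(A_i)`.
-/

open Topology

section Mzpow

variable {X : Type*} [MeasurableSpace X] (T : X ≃ᵐ X)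

lemma mzpow_eq_coe_zpow (n : ℤ) : mzpow T n = ⇑(T.toEquiv ^ n) := by
  unfold mzpow
  split_ifs with h
  · obtain ⟨k, rfl⟩ := Int.eq_ofNat_of_zero_le h
    simp [Equiv.Perm.coe_pow]
  · obtain ⟨k, rfl⟩ : ∃ k : ℕ, n = -(k : ℤ) := ⟨n.natAbs, by omega⟩
    rw [zpow_neg, zpow_natCast, ← inv_pow, Equiv.Perm.coe_pow]
    simp only [neg_neg]
    rfl

lemma mzpow_zero : mzpow T 0 = id := by
  simp [mzpow_eq_coe_zpow]

lemma mzpow_bijective (n : ℤ) : Function.Bijective (mzpow T n) := by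
  rw [mzpow_eq_coe_zpow]
  exact (T.toEquiv ^ n).bijective

lemma measurable_mzpow (n : ℤ) : Measurable (mzpow T n) := by
  unfold mzpow
  split_ifs
  · exact T.measurable.iterate _
  · exact T.symm.measurable.iterate _

lemma measurePreserving_mzpow {μ : Measure X} (hT : MeasurePreserving T μ μ) (n : ℤ) :
    MeasurePreserving (mzpow T n) μ μ := by
  unfold mzpow
  split_ifs
  · exact hT.iterate _
  · exact (hT.symm T).iterate _

lemma image_mzpow_eq_preimage (n : ℤ) (A : Set X) :
    mzpow T n '' A = mzpow T (-n) ⁻¹' A := by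
  rw [mzpow_eq_coe_zpow, mzpow_eq_coe_zpow, Equiv.image_eq_preimage_symm, zpow_neg]
  rfl

lemma image_mzpow_image_mzpow (a b : ℤ) (A : Set X) :
    mzpow T a '' (mzpow T b '' A) = mzpow T (a + b) '' A := by
  simp only [image_image, mzpow_eq_coe_zpow, ← Equiv.Perm.mul_apply, ← zpow_add]

lemma image_mzpow_image_mzpow_neg (n : ℤ) (A : Set X) :
    mzpow T n '' (mzpow T (-n) '' A) = A := by
  rw [image_mzpow_image_mzpow, add_neg_cancel, mzpow_zero, image_id]

lemma measurableSet_image_mzpow (n : ℤ) {A : Set X} (hA : MeasurableSet A) :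
    MeasurableSet (mzpow T n '' A) := by
  rw [image_mzpow_eq_preimage]
  exact measurable_mzpow T _ hA

lemma measure_image_mzpow {μ : Measure X} (hT : MeasurePreserving T μ μ) (n : ℤ)
    {A : Set X} (hA : MeasurableSet A) : μ (mzpow T n '' A) = μ A := by
  rw [image_mzpow_eq_preimage]
  exact (measurePreserving_mzpow T hT (-n)).measure_preimage hA.nullMeasurableSet

lemma measure_iInter_image_mzpow_add {ι : Type*} [Countable ι] {μ : Measure X}
    (hT : MeasurePreserving T μ μ) (c : ℤ) (n : ι → ℤ) {A : ι → Set X}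
    (hA : ∀ i, MeasurableSet (A i)) :
    μ (⋂ i, mzpow T (n i + c) '' A i) = μ (⋂ i, mzpow T (n i) '' A i) := by
  have hshift : ⋂ i, mzpow T (n i + c) '' A i = mzpow T c '' ⋂ i, mzpow T (n i) '' A i := by
    rw [image_iInter (mzpow_bijective T c)]
    simp only [image_mzpow_image_mzpow, add_comm]
  rw [hshift, measure_image_mzpow T hT c (.iInter fun i => measurableSet_image_mzpow T _ (hA i))]

end Mzpow

lemma tendsto_sub_atTop_of_tendsto_succ_sub {ι β : Type*} [AddCommGroup β] [LinearOrder β]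
    [IsOrderedAddMonoid β] {l : Filter ι} {r : ℕ} {m : ι → Fin (r + 1) → β}
    (h : ∀ i : Fin r, Tendsto (fun t => m t i.succ - m t i.castSucc) l atTop)
    {i j : Fin (r + 1)} (hij : i < j) : Tendsto (fun t => m t j - m t i) l atTop := by
  induction j using Fin.induction with
  | zero => exact absurd hij (Fin.not_lt_zero i)
  | succ k ih =>
    rcases (Fin.le_castSucc_iff.2 hij).eq_or_lt with rfl | hik
    · exact h k
    · simpa only [sub_add_sub_cancel] using (h k).atTop_add_atTop (ih hik)

lemma iInter_symmDiff_iInter_subset {ι α : Type*} (f g : ι → Set α) :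
    (⋂ i, f i) ∆ (⋂ i, g i) ⊆ ⋃ i, f i ∆ g i := by
  calc (⋂ i, f i) ∆ (⋂ i, g i) = (⋃ i, (f i)ᶜ) ∆ (⋃ i, (g i)ᶜ) := by
        rw [← compl_symmDiff_compl, compl_iInter, compl_iInter]
    _ ⊆ ⋃ i, (f i)ᶜ ∆ (g i)ᶜ := iUnion_symmDiff_iUnion_subset
    _ = ⋃ i, f i ∆ g i := by simp only [compl_symmDiff_compl]

section UltralimitMeasure

variable {X ι : Type*} [MeasurableSpace X] {μ : Measure X} [IsFiniteMeasure μ]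
  {ν : ι → Measure X}

lemma tsum_eq_of_tendsto_measure {l : Filter ι} [l.NeBot] (hν : ∀ i, ν i ≤ μ)
    {f : ℕ → Set X} (hf : ∀ k, MeasurableSet (f k)) (hd : Pairwise (Function.onFun Disjoint f))
    {a : ℕ → ℝ≥0∞} {b : ℝ≥0∞} (ha : ∀ k, Tendsto (fun i => ν i (f k)) l (𝓝 (a k)))
    (hb : Tendsto (fun i => ν i (⋃ k, f k)) l (𝓝 b)) : b = ∑' k, a k := by
  have hν_top : ∀ i s, ν i s ≠ ∞ := fun i s =>
    ne_top_of_le_ne_top (measure_ne_top μ s) (Measure.le_iff'.1 (hν i) s)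
  have hlim_le : ∀ {s : Set X} {c : ℝ≥0∞}, Tendsto (fun i => ν i s) l (𝓝 c) → c ≤ μ s :=
    fun h => le_of_tendsto' h fun i => Measure.le_iff'.1 (hν i) _
  have hμ_sum : ∑' k, μ (f k) ≠ ∞ := by
    rw [← measure_iUnion hd hf]
    exact measure_ne_top μ _
  have ha_top : ∀ k, a k ≠ ∞ := fun k => ne_top_of_le_ne_top (measure_ne_top μ _) (hlim_le (ha k))
  have hreal : Tendsto (fun i => ∑' k, (ν i (f k)).toReal) l (𝓝 (∑' k, (a k).toReal)) :=
    tendsto_tsum_of_dominated_convergence (ENNReal.summable_toReal hμ_sum)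
      (fun k => (ENNReal.tendsto_toReal (ha_top k)).comp (ha k))
      (.of_forall fun i k => by
        rw [Real.norm_eq_abs, abs_of_nonneg ENNReal.toReal_nonneg]
        exact ENNReal.toReal_mono (measure_ne_top μ _) (Measure.le_iff'.1 (hν i) _))
  have hreal' : Tendsto (fun i => ∑' k, (ν i (f k)).toReal) l (𝓝 b.toReal) := by
    simp_rw [← ENNReal.tsum_toReal_eq (hν_top _ <| f ·), ← measure_iUnion hd hf]
    exact (ENNReal.tendsto_toReal (ne_top_of_le_ne_top (measure_ne_top μ _) (hlim_le hb))).comp hb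
  rw [← ENNReal.toReal_eq_toReal_iff' (ne_top_of_le_ne_top (measure_ne_top μ _) (hlim_le hb))
    (ne_top_of_le_ne_top hμ_sum (ENNReal.tsum_le_tsum fun k => hlim_le (ha k))),
    ENNReal.tsum_toReal_eq ha_top]
  exact tendsto_nhds_unique hreal' hreal

lemma exists_measure_le_forall_tendsto (U : Ultrafilter ι) (hν : ∀ i, ν i ≤ μ) :
    ∃ ρ ≤ μ, ∀ B, MeasurableSet B → Tendsto (fun i => ν i B) U (𝓝 (ρ B)) := by
  set ρ₀ : Set X → ℝ≥0∞ := fun B => (U.map fun i => ν i B).lim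
  have hlim : ∀ B, Tendsto (fun i => ν i B) U (𝓝 (ρ₀ B)) := fun B => by
    simpa only [Tendsto, Ultrafilter.coe_map] using Ultrafilter.le_nhds_lim (U.map fun i => ν i B)
  have hempty : ρ₀ ∅ = 0 := tendsto_nhds_unique (hlim ∅) (by simp)
  let ρ := Measure.ofMeasurable (fun B _ => ρ₀ B) hempty
    fun f hf hd => tsum_eq_of_tendsto_measure hν hf hd (fun k => hlim (f k)) (hlim _)
  refine ⟨ρ, Measure.le_iff.2 fun B hB => ?_, fun B hB => ?_⟩ <;>
    rw [Measure.ofMeasurable_apply B hB]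
  · exact le_of_tendsto' (hlim B) fun i => Measure.le_iff'.1 (hν i) B
  · exact hlim B

end UltralimitMeasure

section ErgodicFamily

variable {X : Type*} [MeasurableSpace X] {μ : Measure X}

/-- Ergodicity of the homoclinic group `H(T)` is `ErgodicFamily μ (IsHomoclinic μ T)`. -/
def ErgodicFamily (μ : Measure X) (P : (X ≃ᵐ X) → Prop) : Prop :=
  ∀ A : Set X, MeasurableSet A →
    (∀ S : X ≃ᵐ X, MeasurePreserving S μ μ → P S → μ ((S '' A) ∆ A) = 0) → μ A = 0 ∨ μ A = 1

lemma measure_inter_le_measure_inter_add_symmDiff (μ : Measure X) (C G G' : Set X) :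
    μ (C ∩ G) ≤ μ (C ∩ G') + μ (G ∆ G') := by
  refine (measure_mono ?_).trans (measure_union_le _ _)
  rintro x ⟨hC, hG⟩
  by_cases hG' : x ∈ G'
  · exact Or.inl ⟨hC, hG'⟩
  · exact Or.inr (mem_symmDiff.2 (Or.inl ⟨hG, hG'⟩))

lemma measure_image_eq_of_tendsto_measure_inter {ι : Type*} {l : Filter ι} [l.NeBot]
    {S : X ≃ᵐ X} (hS : MeasurePreserving S μ μ) {G : ι → Set X}
    (hG : Tendsto (fun t => μ ((S '' G t) ∆ G t)) l (𝓝 0)) {B : Set X} {a b : ℝ≥0∞}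
    (ha : Tendsto (fun t => μ (B ∩ G t)) l (𝓝 a))
    (hb : Tendsto (fun t => μ (S '' B ∩ G t)) l (𝓝 b)) : b = a := by
  have hmap : ∀ t, μ (S '' B ∩ S '' G t) = μ (B ∩ G t) := fun t => by
    rw [← image_inter S.injective, S.image_eq_preimage_symm, (hS.symm S).measure_preimage_equiv]
  have hG' : Tendsto (fun t => μ (G t ∆ (S '' G t))) l (𝓝 0) := by
    simpa only [symmDiff_comm] using hG
  apply le_antisymm
  · refine le_of_tendsto_of_tendsto hb (add_zero a ▸ ha.add hG') (.of_forall fun t => ?_)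
    simpa only [hmap] using measure_inter_le_measure_inter_add_symmDiff μ (S '' B) (G t) (S '' G t)
  · refine le_of_tendsto_of_tendsto ha (add_zero b ▸ hb.add hG) (.of_forall fun t => ?_)
    simpa only [hmap] using measure_inter_le_measure_inter_add_symmDiff μ (S '' B) (S '' G t) (G t)

variable [IsProbabilityMeasure μ] {P : (X ≃ᵐ X) → Prop}

lemma ErgodicFamily.exists_ae_eq_const (h : ErgodicFamily μ P) {Y : Type*} [MeasurableSpace Y]
    [Nonempty Y] [HasCountableSeparatingOn Y MeasurableSet univ] {f : X → Y} (hf : Measurable f)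
    (hinv : ∀ S : X ≃ᵐ X, MeasurePreserving S μ μ → P S → f ∘ S.symm =ᵐ[μ] f) :
    ∃ c, f =ᵐ[μ] Function.const X c := by
  refine exists_eventuallyEq_const_of_forall_separating MeasurableSet fun U hU => ?_
  have hA : MeasurableSet (f ⁻¹' U) := hf hU
  refine (h _ hA fun S hS hPS => ?_).symm.imp (fun h1 => ?_) measure_eq_zero_iff_ae_notMem.1
  · rw [S.image_eq_preimage_symm, measure_symmDiff_eq_zero_iff]
    exact ((hinv S hS hPS).mono fun x hx => by simp [← hx]).set_eq
  · exact mem_ae_iff.2 ((prob_compl_eq_zero_iff hA).2 h1)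

lemma ErgodicFamily.eq_smul_of_map_symm_eq (h : ErgodicFamily μ P) {ρ : Measure X}
    [SigmaFinite ρ] (hρμ : ρ ≪ μ)
    (hρ : ∀ S : X ≃ᵐ X, MeasurePreserving S μ μ → P S → ρ.map S.symm = ρ) :
    ρ = ρ univ • μ := by
  obtain ⟨c, hc⟩ := h.exists_ae_eq_const (Measure.measurable_rnDeriv ρ μ) fun S hS hPS => by
    have h := S.symm.measurableEmbedding.rnDeriv_map ρ μ
    rwa [hρ S hS hPS, (hS.symm S).map_eq] at h
  have hρc : ρ = c • μ := by
    rw [← Measure.withDensity_rnDeriv_eq ρ μ hρμ, withDensity_congr_ae hc]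
    exact withDensity_const c
  rw [hρc]
  simp

lemma ErgodicFamily.tendsto_measure_inter (h : ErgodicFamily μ P) {ι : Type*} {l : Filter ι}
    {G : ι → Set X} {c : ℝ≥0∞} (hc : Tendsto (fun t => μ (G t)) l (𝓝 c))
    (hG : ∀ S : X ≃ᵐ X, MeasurePreserving S μ μ → P S →
      Tendsto (fun t => μ ((S '' G t) ∆ G t)) l (𝓝 0))
    {B : Set X} (hB : MeasurableSet B) :
    Tendsto (fun t => μ (B ∩ G t)) l (𝓝 (c * μ B)) := by
  rw [tendsto_iff_ultrafilter]
  intro U hU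
  obtain ⟨ρ, hρμ, hρ⟩ := exists_measure_le_forall_tendsto U fun t =>
    Measure.restrict_le_self (μ := μ) (s := G t)
  have hρ' : ∀ B, MeasurableSet B → Tendsto (fun t => μ (B ∩ G t)) U (𝓝 (ρ B)) :=
    fun B hB => by simpa only [Measure.restrict_apply hB] using hρ B hB
  have : IsFiniteMeasure ρ := isFiniteMeasure_of_le μ hρμ
  have hρS : ∀ S : X ≃ᵐ X, MeasurePreserving S μ μ → P S → ρ.map S.symm = ρ := by
    intro S hS hPS
    ext B hB
    rw [Measure.map_apply S.symm.measurable hB, ← S.image_eq_preimage_symm]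
    exact measure_image_eq_of_tendsto_measure_inter hS ((hG S hS hPS).mono_left hU) (hρ' B hB)
      (hρ' _ (S.measurableSet_image.2 hB))
  have hρc : ρ univ = c :=
    tendsto_nhds_unique (by simpa using hρ' univ .univ) (hc.mono_left hU)
  have hρμ' := h.eq_smul_of_map_symm_eq (Measure.absolutelyContinuous_of_le hρμ) hρS
  rw [hρμ', hρc] at hρ'
  simpa using hρ' B hB

end ErgodicFamily

section Homoclinic

variable {X : Type*} [MeasurableSpace X] {μ : Measure X} {T : X ≃ᵐ X}

def IsHomoclinic (μ : Measure X) (T S : X ≃ᵐ X) : Prop :=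
  ∀ B : Set X, MeasurableSet B →
    Tendsto (fun n : ℕ => μ (B ∆ ((fun x => mzpow T (n : ℤ) (S (mzpow T (-(n : ℤ)) x))) '' B)))
      atTop (𝓝 0)

lemma measure_image_image_mzpow_neg_symmDiff (hT : MeasurePreserving T μ μ) (S : X ≃ᵐ X)
    {A : Set X} (hA : MeasurableSet A) (n : ℕ) :
    μ ((S '' (mzpow T (-(n : ℤ)) '' A)) ∆ (mzpow T (-(n : ℤ)) '' A)) =
      μ (A ∆ ((fun x => mzpow T (n : ℤ) (S (mzpow T (-(n : ℤ)) x))) '' A)) := by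
  have hC := measurableSet_image_mzpow T (-(n : ℤ)) hA
  rw [← measure_image_mzpow T hT n ((S.measurableSet_image.2 hC).symmDiff hC),
    image_symmDiff (mzpow_bijective T n).injective, image_mzpow_image_mzpow_neg, image_image,
    image_image, symmDiff_comm]

lemma IsHomoclinic.tendsto_measure_image_symmDiff (hT : MeasurePreserving T μ μ) {S : X ≃ᵐ X}
    (hS : IsHomoclinic μ T S) {A : Set X} (hA : MeasurableSet A) {ι : Type*} {l : Filter ι}
    {k : ι → ℤ} (hk : Tendsto k l atBot) :
    Tendsto (fun t => μ ((S '' (mzpow T (k t) '' A)) ∆ (mzpow T (k t) '' A))) l (𝓝 0) := by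
  have hn : Tendsto (fun t => (-k t).toNat) l atTop :=
    (tendsto_atTop_atTop.2 fun b => ⟨(b : ℤ), fun a ha => by omega⟩ :
      Tendsto Int.toNat atTop atTop).comp (tendsto_neg_atBot_atTop.comp hk)
  refine ((hS A hA).comp hn).congr' ?_
  filter_upwards [hk.eventually_le_atBot 0] with t ht
  have hkt : k t = -((-k t).toNat : ℤ) := by omega
  simp only [Function.comp_apply]
  rw [← measure_image_image_mzpow_neg_symmDiff hT S hA, ← hkt]

lemma IsHomoclinic.tendsto_measure_image_iInter_symmDiff (hT : MeasurePreserving T μ μ)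
    {S : X ≃ᵐ X} (hS : IsHomoclinic μ T S) {κ : Type*} [Fintype κ] {A : κ → Set X}
    (hA : ∀ j, MeasurableSet (A j)) {ι : Type*} {l : Filter ι} {k : ι → κ → ℤ}
    (hk : ∀ j, Tendsto (fun t => k t j) l atBot) :
    Tendsto (fun t => μ ((S '' ⋂ j, mzpow T (k t j) '' A j) ∆ ⋂ j, mzpow T (k t j) '' A j))
      l (𝓝 0) := by
  have hsum := tendsto_finsetSum Finset.univ fun j _ =>
    hS.tendsto_measure_image_symmDiff hT (hA j) (hk j)
  rw [Finset.sum_const_zero] at hsum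
  refine tendsto_of_tendsto_of_tendsto_of_le_of_le tendsto_const_nhds hsum (fun _ => zero_le)
    fun t => ?_
  rw [image_iInter S.bijective]
  exact (measure_mono (iInter_symmDiff_iInter_subset _ _)).trans (measure_iUnion_fintype_le _ _)

end Homoclinic

section Mixing

variable {X : Type*} [MeasurableSpace X] {μ : Measure X} [IsProbabilityMeasure μ] {T : X ≃ᵐ X}

lemma ErgodicFamily.tendsto_measure_iInter_mzpow_succ (herg : ErgodicFamily μ (IsHomoclinic μ T))
    (hT : MeasurePreserving T μ μ) {ι : Type*} {l : Filter ι} {r : ℕ} {A : Fin (r + 2) → Set X}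
    (hA : ∀ i, MeasurableSet (A i)) {m : ι → Fin (r + 2) → ℤ}
    (hgap : ∀ i : Fin (r + 1), Tendsto (fun t => m t (Fin.last _) - m t i.castSucc) l atTop)
    (ih : Tendsto (fun t => μ (⋂ i : Fin (r + 1), mzpow T (m t i.castSucc) '' A i.castSucc)) l
      (𝓝 (∏ i : Fin (r + 1), μ (A i.castSucc)))) :
    Tendsto (fun t => μ (⋂ i, mzpow T (m t i) '' A i)) l (𝓝 (∏ i, μ (A i))) := by
  let G : ι → Set X := fun t =>
    ⋂ i : Fin (r + 1), mzpow T (m t i.castSucc - m t (Fin.last _)) '' A i.castSucc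
  have hG : ∀ t, μ (G t) = μ (⋂ i : Fin (r + 1), mzpow T (m t i.castSucc) '' A i.castSucc) :=
    fun t => by
      simpa only [sub_add_cancel] using (measure_iInter_image_mzpow_add T hT (m t (Fin.last _))
        (fun i : Fin (r + 1) => m t i.castSucc - m t (Fin.last _)) fun i => hA i.castSucc).symm
  have hsplit : ∀ t, μ (⋂ i, mzpow T (m t i) '' A i) = μ (A (Fin.last _) ∩ G t) := fun t => by
    have hshift := measure_iInter_image_mzpow_add T hT (m t (Fin.last _))
      (fun i => m t i - m t (Fin.last _)) hA
    simp only [sub_add_cancel] at hshift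
    rw [hshift]
    congr 1
    ext x
    simp only [mem_iInter, mem_inter_iff, Fin.forall_fin_succ' (n := r + 1), sub_self, mzpow_zero,
      image_id, G, and_comm]
  rw [funext hsplit, Fin.prod_univ_castSucc]
  refine herg.tendsto_measure_inter (by simpa only [hG] using ih) (fun S _ hS => ?_) (hA _)
  exact hS.tendsto_measure_image_iInter_symmDiff hT (fun i => hA _) fun i =>
    (tendsto_neg_atTop_atBot.comp (hgap i)).congr fun t => neg_sub _ _

theorem ErgodicFamily.tendsto_measure_iInter_mzpow (herg : ErgodicFamily μ (IsHomoclinic μ T))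
    (hT : MeasurePreserving T μ μ) {ι : Type*} {l : Filter ι} :
    ∀ (r : ℕ) (A : Fin (r + 1) → Set X), (∀ i, MeasurableSet (A i)) →
      ∀ m : ι → Fin (r + 1) → ℤ,
      (∀ i : Fin r, Tendsto (fun t => m t i.succ - m t i.castSucc) l atTop) →
      Tendsto (fun t => μ (⋂ i, mzpow T (m t i) '' A i)) l (𝓝 (∏ i, μ (A i))) := by
  intro r
  induction r with
  | zero =>
    intro A hA m _
    have hconst : ∀ t, μ (⋂ i, mzpow T (m t i) '' A i) = μ (A 0) := fun t => by
      rw [← measure_image_mzpow T hT (m t 0) (hA 0)]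
      congr 1
      ext x
      simp only [mem_iInter, Fin.forall_fin_succ, IsEmpty.forall_iff, and_true]
    simpa only [hconst, Fin.prod_univ_succ, Fin.prod_univ_zero, mul_one] using tendsto_const_nhds
  | succ r ih =>
    intro A hA m hgap
    refine herg.tendsto_measure_iInter_mzpow_succ hT hA
      (fun i => tendsto_sub_atTop_of_tendsto_succ_sub hgap (Fin.castSucc_lt_last i))
      (ih _ (fun i => hA _) _ fun i => ?_)
    simpa only [Fin.succ_castSucc] using hgap i.castSucc

end Mixing

/-- A measure-preserving transformation `T` of a probability space
whose homoclinic group `H(T) = {S : TⁿST⁻ⁿ → Id}` acts ergodically is mixing of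
all orders: for sets `A_0, …, A_r` and times `0 = n_0, n_1, …, n_r` whose
successive gaps tend to infinity,
`μ(T^{n_0}A_0 ∩ … ∩ T^{n_r}A_r) → μ(A_0)⋯μ(A_r)`. -/
theorem stmt12 {X : Type*} [MeasurableSpace X] (μ : Measure X)
    [IsProbabilityMeasure μ] (T : X ≃ᵐ X) (hT : MeasurePreserving T μ μ)
    -- the homoclinic group of `T` is ergodic
    (herg : ∀ A : Set X, MeasurableSet A →
      (∀ S : X ≃ᵐ X, MeasurePreserving S μ μ →
        (∀ B : Set X, MeasurableSet B →
          Tendsto (fun n : ℕ =>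
            μ (B ∆ ((fun x => mzpow T (n : ℤ) (S (mzpow T (-(n : ℤ)) x))) '' B)))
            atTop (nhds 0)) →
        μ ((S '' A) ∆ A) = 0) →
      μ A = 0 ∨ μ A = 1) :
    ∀ (r : ℕ) (A : Fin (r + 1) → Set X), (∀ i, MeasurableSet (A i)) →
      ∀ m : ℕ → Fin (r + 1) → ℤ, (∀ t, m t 0 = 0) →
      (∀ i : Fin r, Tendsto (fun t => m t i.succ - m t i.castSucc) atTop atTop) →
      Tendsto (fun t => μ (⋂ i, mzpow T (m t i) '' A i)) atTop
        (nhds (∏ i, μ (A i))) := by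
  intro r A hA m _ hgap
  exact ErgodicFamily.tendsto_measure_iInter_mzpow herg hT r A hA m hgap
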